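/- arXiv:1805.06990 — 6 statements merged into one kernel-verified Lean document; each statement's English description precedes it below -/
import Mathlib

section
/- For any monotone non-negative function f on the integer lattice with f(0)=0, the diminishing-return ratio of f is at most the submodularity ratio of f. That is, if γ_d ∈ [0,1] satisfies γ_d·(f(w+s)−f(w)) ≤ f(v+s)−f(v) for all unit vectors s and all v ≤ w with w+s ≤ b, then for all v ≤ w ≤ b, γ_d·(f(w)−f(v)) ≤ Σ_{s in the multiset w−v} (f(v+s)−f(v)). -/
/-!
Telescope `f w - f v` along a lattice path from `v` to `w` that raises one coordinate at a time.
By the DR inequality applied with `v ≤ w'`, `γd` times the gain of the step `w' → w' + unitVec s`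
is at most the gain `f (v + unitVec s) - f v` of the same step taken at `v`, and coordinate `s`
is raised exactly `w s - v s` times.
-/

/-- The unit vector (indicator) of an element `s`. -/
def unitVec {S : Type*} [DecidableEq S] (s : S) : S → ℕ := fun i => if i = s then 1 else 0

section LatticePath

variable {S : Type*} [DecidableEq S]

theorem unitVec_eq_pi_single (s : S) : unitVec s = Pi.single s 1 := by
  ext i
  simp [unitVec, Pi.single_apply]

theorem exists_le_add_unitVec_eq_of_lt {v w : S → ℕ} (h : v < w) :
    ∃ s w', v ≤ w' ∧ w' + unitVec s = w := by
  obtain ⟨s, hs⟩ := Pi.lt_def.mp h |>.2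
  refine ⟨s, w - unitVec s, fun i => ?_, funext fun i => ?_⟩ <;>
  · have hi : v i ≤ w i := h.le i
    simp only [unitVec, Pi.sub_apply, Pi.add_apply]
    split_ifs with his
    · subst his; omega
    · omega

theorem sum_sub_mul_add_unitVec [Fintype S] {v w : S → ℕ} (h : v ≤ w) (s : S) (c : S → ℝ) :
    ∑ t, (((w + unitVec s) t - v t : ℕ) : ℝ) * c t = ∑ t, ((w t - v t : ℕ) : ℝ) * c t + c s := by
  have hsplit : ∀ t, (w + unitVec s) t - v t = (w t - v t) + (Pi.single s 1 : S → ℕ) t := by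
    intro t
    rw [Pi.add_apply, unitVec_eq_pi_single]
    have ht : v t ≤ w t := h t
    omega
  simp only [hsplit, Nat.cast_add, add_mul, Finset.sum_add_distrib]
  simp [Pi.single_apply]

theorem mul_sub_le_sum_of_mul_add_unitVec_sub_le [Fintype S] {f : (S → ℕ) → ℝ} {γ : ℝ}
    {v b : S → ℕ} {c : S → ℝ}
    (hstep : ∀ s w, v ≤ w → w + unitVec s ≤ b → γ * (f (w + unitVec s) - f w) ≤ c s)
    (w : S → ℕ) (hvw : v ≤ w) (hwb : w ≤ b) :
    γ * (f w - f v) ≤ ∑ s, ((w s - v s : ℕ) : ℝ) * c s := by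
  induction w using WellFoundedLT.induction with
  | _ w ih =>
    rcases hvw.eq_or_lt with rfl | hlt
    · simp
    obtain ⟨s, w', hvw', rfl⟩ := exists_le_add_unitVec_eq_of_lt hlt
    have hw'b : w' ≤ b := le_trans le_self_add hwb
    have hprefix := ih w' (lt_add_of_pos_right w' (by simp [unitVec_eq_pi_single])) hvw' hw'b
    have hlast := hstep s w' hvw' hwb
    rw [sum_sub_mul_add_unitVec hvw']
    linarith

end LatticePath

theorem dr_ratio_le_submodularity_ratio_general
    {S : Type*} [Fintype S] [DecidableEq S]
    (b : S → ℕ) (f : (S → ℕ) → ℝ) (γd : ℝ)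
    (hDR : ∀ (s : S) (v w : S → ℕ), v ≤ w → w + unitVec s ≤ b →
      γd * (f (w + unitVec s) - f w) ≤ f (v + unitVec s) - f v) :
    ∀ v w : S → ℕ, v ≤ w → w ≤ b →
      γd * (f w - f v) ≤ ∑ s : S, ((w s - v s : ℕ) : ℝ) * (f (v + unitVec s) - f v) :=
  fun v => mul_sub_le_sum_of_mul_add_unitVec_sub_le fun s w hvw hwb => hDR s v w hvw hwb

/-- Proposition 1: the DR ratio is at most the submodularity ratio, in the sense that
the DR inequality with constant `γd` implies the submodularity-ratio inequality with
the same constant. -/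
theorem dr_ratio_le_submodularity_ratio
    {S : Type*} [Fintype S] [DecidableEq S]
    (b : S → ℕ) (f : (S → ℕ) → ℝ) (γd : ℝ)
    (hnonneg : ∀ x : S → ℕ, x ≤ b → 0 ≤ f x)
    (hmono : ∀ v w : S → ℕ, v ≤ w → w ≤ b → f v ≤ f w)
    (hzero : f 0 = 0)
    (hγd0 : 0 ≤ γd) (hγd1 : γd ≤ 1)
    (hDR : ∀ (s : S) (v w : S → ℕ), v ≤ w → w + unitVec s ≤ b →
      γd * (f (w + unitVec s) - f w) ≤ f (v + unitVec s) - f v) :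
    ∀ v w : S → ℕ, v ≤ w → w ≤ b →
      γd * (f w - f v) ≤ ∑ s : S, ((w s - v s : ℕ) : ℝ) * (f (v + unitVec s) - f v) :=
  dr_ratio_le_submodularity_ratio_general b f γd hDR
end

section
/- Let f be monotone on the lattice and fix a current vector g, direction s, threshold τ > 0, and maximum step L ≥ 1. Suppose f(g+L·s)−f(g) < L·τ and f(g+s)−f(g) ≥ τ. Then there exists l with 1 ≤ l < L such that f(g+l·s)−f(g) ≥ l·τ and f(g+(l+1)·s)−f(g+l·s) < τ. -/
theorem Nat.exists_and_not_succ_of_le {P : ℕ → Prop} {a b : ℕ} (hab : a ≤ b) (ha : P a)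
    (hb : ¬ P b) : ∃ l, a ≤ l ∧ l < b ∧ P l ∧ ¬ P (l + 1) := by
  induction b, hab using Nat.le_induction with
  | base => exact absurd ha hb
  | succ b hab ih =>
    by_cases hPb : P b
    · exact ⟨b, hab, b.lt_succ_self, hPb, hb⟩
    · obtain ⟨l, hal, hlb, hl⟩ := ih hPb
      exact ⟨l, hal, hlb.trans b.lt_succ_self, hl⟩

theorem exists_pivot_of_seq (φ : ℕ → ℝ) {τ : ℝ} {L : ℕ} (htop : φ L - φ 0 < L * τ)
    (hbot : τ ≤ φ 1 - φ 0) :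
    ∃ l : ℕ, 1 ≤ l ∧ l < L ∧ l * τ ≤ φ l - φ 0 ∧ φ (l + 1) - φ l < τ := by
  have hL : 1 ≤ L := Nat.one_le_iff_ne_zero.mpr (by rintro rfl; simp at htop)
  obtain ⟨l, h1l, hlL, hl, hl1⟩ := Nat.exists_and_not_succ_of_le
    (P := fun l : ℕ => l * τ ≤ φ l - φ 0) hL (by simpa using hbot) htop.not_ge
  refine ⟨l, h1l, hlL, hl, ?_⟩
  push_cast at hl1
  linarith

theorem exists_pivot_general
    {S : Type*} [DecidableEq S]
    (f : (S → ℕ) → ℝ) (g : S → ℕ) (s : S) (τ : ℝ) (L : ℕ)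
    (htop : f (g + L • unitVec s) - f g < (L : ℝ) * τ)
    (hbot : τ ≤ f (g + unitVec s) - f g) :
    ∃ l : ℕ, 1 ≤ l ∧ l < L ∧
      (l : ℝ) * τ ≤ f (g + l • unitVec s) - f g ∧
      f (g + (l + 1) • unitVec s) - f (g + l • unitVec s) < τ := by
  simpa using exists_pivot_of_seq (fun l => f (g + l • unitVec s))
    (by simpa using htop) (by simpa using hbot)

/-- Existence of a pivot between 1 and L under the binary-search endpoint invariants. -/
theorem exists_pivot
    {S : Type*} [DecidableEq S]
    (f : (S → ℕ) → ℝ) (g : S → ℕ) (s : S) (τ : ℝ) (L : ℕ)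
    (hτ : 0 < τ) (hL : 1 ≤ L)
    (htop : f (g + L • unitVec s) - f g < (L : ℝ) * τ)
    (hbot : τ ≤ f (g + unitVec s) - f g) :
    ∃ l : ℕ, 1 ≤ l ∧ l < L ∧
      (l : ℝ) * τ ≤ f (g + l • unitVec s) - f g ∧
      f (g + (l + 1) • unitVec s) - f (g + l • unitVec s) < τ :=
  exists_pivot_general f g s τ L htop hbot
end

section
/- Let a sequence of positive integers l^1,…,l^T sum to k, let 0 < c ≤ 1, and let f(g^0)=0 with f(g^t) − f(g^{t−1}) ≥ (l^t·c/k)·(F − f(g^{t−1})) for all t, where F ≥ 0. Then f(g^T) ≥ (1 − e^{−c})·F. -/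
/-! If each step closes at least an `a t`-fraction of the remaining gap `F - f t`, the gap after
`n` steps is at most `∏ (1 - a t)` times the initial one, and `1 - x ≤ e^{-x}` bounds this
product by `e^{-∑ a t}`. With `a t = l t * c / k` the exponent is exactly `-c`. -/

open Finset

theorem sub_le_mul_prod_one_sub_of_step {n : ℕ} (a : Fin n → ℝ) (F : ℝ) (f : ℕ → ℝ)
    (ha : ∀ t, a t ≤ 1) (hstep : ∀ t : Fin n, a t * (F - f t) ≤ f (t + 1) - f t) :
    F - f n ≤ (F - f 0) * ∏ t, (1 - a t) := by
  induction n with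
  | zero => simp
  | succ n ih =>
    have hlast := hstep (Fin.last n)
    simp only [Fin.val_last] at hlast
    calc F - f (n + 1) ≤ (F - f n) * (1 - a (Fin.last n)) := by linarith
      _ ≤ (F - f 0) * (∏ t : Fin n, (1 - a t.castSucc)) * (1 - a (Fin.last n)) :=
          mul_le_mul_of_nonneg_right
            (ih (a ∘ Fin.castSucc) (fun t => ha _) (fun t => hstep t.castSucc))
            (sub_nonneg.mpr (ha _))
      _ = (F - f 0) * ∏ t, (1 - a t) := by rw [Fin.prod_univ_castSucc, mul_assoc]

theorem prod_one_sub_le_exp_neg_sum {ι : Type*} (s : Finset ι) (a : ι → ℝ)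
    (ha : ∀ i ∈ s, a i ≤ 1) : ∏ i ∈ s, (1 - a i) ≤ Real.exp (-∑ i ∈ s, a i) := by
  rw [← sum_neg_distrib, Real.exp_sum]
  exact prod_le_prod (fun i hi => sub_nonneg.mpr (ha i hi))
    (fun i _ => Real.one_sub_le_exp_neg (a i))

theorem greedy_recursion_general
    (T k : ℕ) (l : Fin T → ℕ) (c F : ℝ) (fg : ℕ → ℝ)
    (hk : 0 < k)
    (hsum : ∑ t : Fin T, l t = k)
    (hc1 : c ≤ 1)
    (hF : 0 ≤ F)
    (h0 : fg 0 = 0)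
    (hstep : ∀ t : Fin T,
      ((l t : ℝ) * c / (k : ℝ)) * (F - fg t) ≤ fg (t + 1) - fg t) :
    (1 - Real.exp (-c)) * F ≤ fg T := by
  have hkR : (0 : ℝ) < k := by exact_mod_cast hk
  have hsumR : ∑ t, (l t : ℝ) = k := by exact_mod_cast hsum
  have hfrac_le : ∀ t, (l t : ℝ) * c / k ≤ 1 := by
    intro t
    have hlk : (l t : ℝ) ≤ k := by
      exact_mod_cast hsum ▸ single_le_sum (fun i _ => Nat.zero_le (l i)) (mem_univ t)
    rw [div_le_one hkR]
    nlinarith [(Nat.cast_nonneg (l t) : (0 : ℝ) ≤ l t)]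
  have hfrac_sum : ∑ t, (l t : ℝ) * c / k = c := by
    rw [← sum_div, ← sum_mul, hsumR, mul_div_cancel_left₀ c hkR.ne']
  have hgap := sub_le_mul_prod_one_sub_of_step _ F fg hfrac_le hstep
  have hprod := prod_one_sub_le_exp_neg_sum univ _ (fun t _ => hfrac_le t)
  rw [hfrac_sum] at hprod
  rw [h0, sub_zero] at hgap
  linarith [mul_le_mul_of_nonneg_left hprod hF]

/-- The key greedy recursion lemma: per-step improvement proportional to the remaining
gap implies the `1 - e^{-c}` guarantee. -/
theorem greedy_recursion
    (T k : ℕ) (l : Fin T → ℕ) (c F : ℝ) (fg : ℕ → ℝ)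
    (hk : 0 < k)
    (hl : ∀ t : Fin T, 0 < l t)
    (hsum : ∑ t : Fin T, l t = k)
    (hc0 : 0 < c) (hc1 : c ≤ 1)
    (hF : 0 ≤ F)
    (h0 : fg 0 = 0)
    (hstep : ∀ t : Fin T,
      ((l t : ℝ) * c / (k : ℝ)) * (F - fg t) ≤ fg (t + 1) - fg t) :
    (1 - Real.exp (-c)) * F ≤ fg T :=
  greedy_recursion_general T k l c F fg hk hsum hc1 hF h0 hstep
end

section
/- Suppose f is monotone with DR ratio at least γ_d ≥ ε > 0 and maximum singleton value M = max_s f(s), and f(Ω) ≥ M for the optimum Ω. Let g ≤ g′ with the multiset difference {g′}∖{g} = {s_1,…,s_ℓ}, ℓ ≤ k, and suppose for each i there exists h_i ≤ g with f(h_i + s_i) − f(h_i) < ε²M/k. Then f(g′) − f(g) ≤ ε·f(Ω); consequently, if f(g′) ≥ Φ·f(Ω) for some Φ > ε, then f(g) ≥ (Φ − ε)·f(Ω). -/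
/-!
Telescope `f g' - f g` along the chain `g ≤ g + s₁ ≤ g + s₁ + s₂ ≤ ⋯ ≤ g'`. The `i`-th step is a
marginal gain at a point above `hᵢ`, so the DR ratio bounds it by `1/γ_d ≤ 1/ε` times the small
gain at `hᵢ`, i.e. by `ε M / k ≤ ε f(Ω) / k`; there are `ℓ ≤ k` steps.
-/

section MarginalGains

variable {M : Type*} [AddCommMonoid M] [PartialOrder M] [CanonicallyOrderedAdd M] (f : M → ℝ)

theorem sub_le_sum_of_marginal_le {ι : Type*} (t : Finset ι) (x : ι → M) (c : ι → ℝ) (g : M)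
    (hgain : ∀ i ∈ t, ∀ w, g ≤ w → f (w + x i) - f w ≤ c i) :
    f (g + ∑ i ∈ t, x i) - f g ≤ ∑ i ∈ t, c i := by
  classical
  induction t using Finset.induction_on with
  | empty => simp
  | insert a t ha ih =>
    have hstep : f ((g + ∑ i ∈ t, x i) + x a) - f (g + ∑ i ∈ t, x i) ≤ c a :=
      hgain a (Finset.mem_insert_self a t) _ le_self_add
    have hrest := ih fun i hi => hgain i (Finset.mem_insert_of_mem hi)
    rw [Finset.sum_insert ha, Finset.sum_insert ha, add_comm (x a), ← add_assoc]
    linarith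

theorem marginal_lt_of_dr_ratio (hmono : Monotone f) {γ ε b : ℝ} (hε : 0 < ε) (hγ : ε ≤ γ)
    {v w x : M} (hDR : γ * (f (w + x) - f w) ≤ f (v + x) - f v)
    (hsmall : f (v + x) - f v < ε * b) :
    f (w + x) - f w < b := by
  have hgain_nonneg : 0 ≤ f (w + x) - f w := sub_nonneg.mpr (hmono le_self_add)
  have hscaled : ε * (f (w + x) - f w) < ε * b :=
    calc ε * (f (w + x) - f w) ≤ γ * (f (w + x) - f w) := by gcongr
      _ < ε * b := hDR.trans_lt hsmall
  exact lt_of_mul_lt_mul_left hscaled hε.le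

end MarginalGains

theorem completion_loss_small_general
    {S : Type*} [DecidableEq S]
    (f : (S → ℕ) → ℝ) (γd ε M : ℝ) (k : ℕ) (Ω g : S → ℕ)
    (ℓ : ℕ) (s : Fin ℓ → S)
    (hnonneg : ∀ x : S → ℕ, 0 ≤ f x)
    (hmono : ∀ v w : S → ℕ, v ≤ w → f v ≤ f w)
    (hε : 0 < ε) (hγd : ε ≤ γd)
    (hDR : ∀ (i : S) (v w : S → ℕ), v ≤ w →
      γd * (f (w + unitVec i) - f w) ≤ f (v + unitVec i) - f v)
    (hΩ : M ≤ f Ω)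
    (hℓ : ℓ ≤ k)
    (g' : S → ℕ)
    (hg' : g' = g + ∑ i : Fin ℓ, unitVec (s i))
    (hsmall : ∀ i : Fin ℓ, ∃ h : S → ℕ, h ≤ g ∧
      f (h + unitVec (s i)) - f h < ε ^ 2 * M / (k : ℝ)) :
    f g' - f g ≤ ε * f Ω ∧
      ∀ Φ : ℝ, ε < Φ → Φ * f Ω ≤ f g' → (Φ - ε) * f Ω ≤ f g := by
  have hfΩ := hnonneg Ω
  have hgain : ∀ i ∈ Finset.univ, ∀ w, g ≤ w →
      f (w + unitVec (s i)) - f w ≤ ε * f Ω / k := by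
    intro i _ w hgw
    obtain ⟨h, hhg, hh⟩ := hsmall i
    refine (marginal_lt_of_dr_ratio f (fun v w => hmono v w) hε hγd
      (hDR _ h w (hhg.trans hgw)) (hh.trans_le ?_)).le
    rw [mul_div_assoc', ← mul_assoc, ← sq]
    gcongr
  have hloss : f g' - f g ≤ ε * f Ω :=
    calc f g' - f g ≤ ∑ _i : Fin ℓ, ε * f Ω / k :=
          hg' ▸ sub_le_sum_of_marginal_le f _ _ _ g hgain
      _ = ℓ / k * (ε * f Ω) := by
          rw [Finset.sum_const, Finset.card_fin, nsmul_eq_mul]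
          ring
      _ ≤ ε * f Ω := mul_le_of_le_one_left (by positivity)
          (div_le_one_of_le₀ (by exact_mod_cast hℓ) (by positivity))
  exact ⟨hloss, fun Φ _ hΦ => by linarith⟩

/-- Claim 1 (wlog claim): if every element added beyond `g` has small gain somewhere
below `g`, then completing `g` to `g'` changes the value by at most `ε f(Ω)`. -/
theorem completion_loss_small
    {S : Type*} [Fintype S] [DecidableEq S]
    (f : (S → ℕ) → ℝ) (γd ε M : ℝ) (k : ℕ) (Ω g : S → ℕ)
    (ℓ : ℕ) (s : Fin ℓ → S)
    (hnonneg : ∀ x : S → ℕ, 0 ≤ f x)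
    (hmono : ∀ v w : S → ℕ, v ≤ w → f v ≤ f w)
    (hzero : f 0 = 0)
    (hε : 0 < ε) (hγd : ε ≤ γd)
    (hDR : ∀ (i : S) (v w : S → ℕ), v ≤ w →
      γd * (f (w + unitVec i) - f w) ≤ f (v + unitVec i) - f v)
    (hM : ∀ i : S, f (unitVec i) ≤ M)
    (hΩ : M ≤ f Ω)
    (hk : 0 < k) (hℓ : ℓ ≤ k)
    (g' : S → ℕ)
    (hg' : g' = g + ∑ i : Fin ℓ, unitVec (s i))
    (hsmall : ∀ i : Fin ℓ, ∃ h : S → ℕ, h ≤ g ∧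
      f (h + unitVec (s i)) - f h < ε ^ 2 * M / (k : ℝ)) :
    f g' - f g ≤ ε * f Ω ∧
      ∀ Φ : ℝ, ε < Φ → Φ * f Ω ≤ f g' → (Φ - ε) * f Ω ≤ f g :=
  completion_loss_small_general f γd ε M k Ω g ℓ s hnonneg hmono hε hγd hDR hΩ hℓ g' hg' hsmall
end

section
/- Monotonicity of β in FastGreedy: if at some iteration β ≤ γ_d (the DR ratio of f), and for every s ∈ S there exists g^s ≤ g with f(g^s + s) − f(g^s) < β·κ·m, then for every s ∈ S, f(g + s) − f(g) ≤ κ·m; hence max_s (f(g+s)−f(g)) ≤ κ·m. -/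
theorem le_of_mul_le_of_lt_mul {α : Type*} [Field α] [LinearOrder α] [IsStrictOrderedRing α]
    {a b c β γ : α} (hγ : 0 < γ) (hβ : β ≤ γ) (hc : 0 ≤ c)
    (hab : γ * a ≤ b) (hbc : b < β * c) : a ≤ c := by
  refine le_of_mul_le_mul_left ?_ hγ
  calc γ * a ≤ b := hab
    _ ≤ β * c := hbc.le
    _ ≤ γ * c := mul_le_mul_of_nonneg_right hβ hc

theorem beta_step_general
    {S : Type*} [DecidableEq S]
    (f : (S → ℕ) → ℝ) (g : S → ℕ) (γd β κ m : ℝ)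
    (hγd0 : 0 < γd)
    (hβ : β ≤ γd)
    (hκ : 0 < κ)
    (hm : 0 < m)
    (hDR : ∀ (s : S) (v w : S → ℕ), v ≤ w →
      γd * (f (w + unitVec s) - f w) ≤ f (v + unitVec s) - f v)
    (hwit : ∀ s : S, ∃ gs : S → ℕ, gs ≤ g ∧
      f (gs + unitVec s) - f gs < β * κ * m) :
    ∀ s : S, f (g + unitVec s) - f g ≤ κ * m := by
  intro s
  obtain ⟨gs, hgs, hgain⟩ := hwit s
  rw [mul_assoc] at hgain
  exact le_of_mul_le_of_lt_mul hγd0 hβ (mul_pos hκ hm).le (hDR s gs g hgs) hgain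

/-- Core step of Lemma 2 (monotonicity of β in FastGreedy): if `β ≤ γd` and each `s`
has a witness `gˢ ≤ g` with gain below `β κ m`, then every current marginal gain is
at most `κ m`. -/
theorem beta_step
    {S : Type*} [DecidableEq S]
    (f : (S → ℕ) → ℝ) (g : S → ℕ) (γd β κ m : ℝ)
    (hmono : ∀ v w : S → ℕ, v ≤ w → f v ≤ f w)
    (hγd0 : 0 < γd) (hγd1 : γd ≤ 1)
    (hβ : β ≤ γd)
    (hκ : 0 < κ) (hκ1 : κ < 1)
    (hm : 0 < m)
    (hDR : ∀ (s : S) (v w : S → ℕ), v ≤ w →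
      γd * (f (w + unitVec s) - f w) ≤ f (v + unitVec s) - f v)
    (hwit : ∀ s : S, ∃ gs : S → ℕ, gs ≤ g ∧
      f (gs + unitVec s) - f gs < β * κ * m) :
    ∀ s : S, f (g + unitVec s) - f g ≤ κ * m :=
  beta_step_general f g γd β κ m hγd0 hβ hκ hm hDR hwit
end

section
/- Submodularity-ratio step bound: let f be monotone with submodularity ratio γ_s, let g ≤ b, Ω ≤ b with ‖Ω‖₁ ≤ k, and suppose f(g+s) − f(g) ≤ D for every s in the multiset {(Ω ∨ g) − g}. Then γ_s·(f(Ω) − f(g)) ≤ k·D. -/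
/-! Compare `f Ω` with `f (Ω ⊔ g)` by monotonicity, apply the submodularity ratio to `g ≤ Ω ⊔ g`,
and bound each of the `(Ω ⊔ g) s - g s ≤ Ω s` copies of the step `s` in `{(Ω ⊔ g) − g}` by `D`. -/

theorem sum_sup_tsub_le {S : Type*} [Fintype S] (Ω g : S → ℕ) :
    ∑ s : S, ((Ω ⊔ g) s - g s) ≤ ∑ s : S, Ω s :=
  Finset.sum_le_sum fun s _ => by simp only [Pi.sup_apply]; omega

theorem sum_natCast_mul_le_of_pos {ι : Type*} (t : Finset ι) (w : ι → ℕ) (x : ι → ℝ) (D : ℝ)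
    (hx : ∀ i ∈ t, 0 < w i → x i ≤ D) :
    ∑ i ∈ t, (w i : ℝ) * x i ≤ ((∑ i ∈ t, w i : ℕ) : ℝ) * D := by
  rw [Nat.cast_sum, Finset.sum_mul]
  refine Finset.sum_le_sum fun i hi => ?_
  rcases (w i).eq_zero_or_pos with hw | hw
  · simp [hw]
  · exact mul_le_mul_of_nonneg_left (hx i hi hw) (Nat.cast_nonneg _)

theorem submodularity_ratio_step_bound_general
    {S : Type*} [Fintype S] [DecidableEq S]
    (f : (S → ℕ) → ℝ) (γs D : ℝ) (k : ℕ) (g Ω : S → ℕ)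
    (hmono : ∀ v w : S → ℕ, v ≤ w → f v ≤ f w)
    (hγs0 : 0 ≤ γs)
    (hsub : ∀ v w : S → ℕ, v ≤ w →
      γs * (f w - f v) ≤ ∑ s : S, ((w s - v s : ℕ) : ℝ) * (f (v + unitVec s) - f v))
    (hk : ∑ s : S, Ω s ≤ k)
    (hD0 : 0 ≤ D)
    (hD : ∀ s : S, g s < (Ω ⊔ g) s → f (g + unitVec s) - f g ≤ D) :
    γs * (f Ω - f g) ≤ (k : ℝ) * D := by
  have hcard : ((∑ s : S, ((Ω ⊔ g) s - g s) : ℕ) : ℝ) ≤ k := by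
    exact_mod_cast (sum_sup_tsub_le Ω g).trans hk
  calc γs * (f Ω - f g) ≤ γs * (f (Ω ⊔ g) - f g) := by
        gcongr
        exact hmono _ _ le_sup_left
    _ ≤ ∑ s : S, (((Ω ⊔ g) s - g s : ℕ) : ℝ) * (f (g + unitVec s) - f g) :=
        hsub _ _ le_sup_right
    _ ≤ ((∑ s : S, ((Ω ⊔ g) s - g s) : ℕ) : ℝ) * D :=
        sum_natCast_mul_le_of_pos _ _ _ _ fun s _ hs => hD s (Nat.lt_of_sub_pos hs)
    _ ≤ (k : ℝ) * D := mul_le_mul_of_nonneg_right hcard hD0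

/-- Submodularity-ratio step bound: if every element of the multiset `{(Ω ∨ g) − g}`
has marginal gain at most `D` at `g`, then `γs (f(Ω) − f(g)) ≤ k D`. -/
theorem submodularity_ratio_step_bound
    {S : Type*} [Fintype S] [DecidableEq S]
    (f : (S → ℕ) → ℝ) (γs D : ℝ) (k : ℕ) (g Ω : S → ℕ)
    (hnonneg : ∀ x : S → ℕ, 0 ≤ f x)
    (hmono : ∀ v w : S → ℕ, v ≤ w → f v ≤ f w)
    (hzero : f 0 = 0)
    (hγs0 : 0 ≤ γs) (hγs1 : γs ≤ 1)
    (hsub : ∀ v w : S → ℕ, v ≤ w →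
      γs * (f w - f v) ≤ ∑ s : S, ((w s - v s : ℕ) : ℝ) * (f (v + unitVec s) - f v))
    (hk : ∑ s : S, Ω s ≤ k)
    (hD0 : 0 ≤ D)
    (hD : ∀ s : S, g s < (Ω ⊔ g) s → f (g + unitVec s) - f g ≤ D) :
    γs * (f Ω - f g) ≤ (k : ℝ) * D :=
  submodularity_ratio_step_bound_general f γs D k g Ω hmono hγs0 hsub hk hD0 hD
end
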